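/- arXiv:1210.5762 — 3 statements merged into one kernel-verified Lean document; each statement's English description precedes it below -/
import Mathlib

section
/- Let g_1, …, g_n be elementary Nielsen folds of F_r such that g = g_n∘⋯∘g_1 is a train track map, and extend the indices periodically by g_{k+n} = g_k. Fix an index k, let u = u(g_k) be the unique letter moved by the direction map Dg_k and let a = Dg_k(u), so that applying g_k letterwise to the one-letter word u gives the two-letter word a·u. Then for every index l ≤ k (in the periodic extension), the word obtained by applying the folds g_l, g_{l+1}, …, g_k successively letterwise to the one-letter word u contains a·u as an adjacent two-letter subword; equivalently, that word crosses the turn {ā, u}. -/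
/-- A letter (direction) of the free group `F_r`: `(i, true)` is `x_i`, `(i, false)` is `x_i⁻¹`. -/
abbrev Letter (r : ℕ) := Fin r × Bool

/-- The inverse letter. -/
def Letter.inv {r : ℕ} (d : Letter r) : Letter r := (d.1, !d.2)

/-- A word is reduced if no two adjacent letters are mutually inverse. -/
def IsReducedWord {r : ℕ} (w : List (Letter r)) : Prop :=
  w.Chain' fun x y => y ≠ x.inv

/-- Apply an endomorphism of `F_r` letterwise to a word: each letter is replaced by the
reduced word of its image and the results are concatenated, with no free reduction. -/
def applyLW {r : ℕ} (h : Monoid.End (FreeGroup (Fin r))) (w : List (Letter r)) :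
    List (Letter r) :=
  w.flatMap fun d => (h (FreeGroup.mk [d])).toWord

/-- `h` is a train track map if every letterwise iterate of `h` on a single letter is reduced. -/
def IsTrainTrack {r : ℕ} (h : Monoid.End (FreeGroup (Fin r))) : Prop :=
  ∀ p : ℕ, 1 ≤ p → ∀ d : Letter r, IsReducedWord ((applyLW h)^[p] [d])

/-- The elementary Nielsen fold with folded index `m`, fold letter `a`, sending
`x_m ↦ a·x_m` (if `pre = true`) or `x_m ↦ x_m·a` (if `pre = false`) and fixing all
other generators. -/
def NielsenFoldHom {r : ℕ} (m : Fin r) (a : Letter r) (pre : Bool) :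
    Monoid.End (FreeGroup (Fin r)) :=
  FreeGroup.lift fun t =>
    if t = m then
      if pre then FreeGroup.mk [a] * FreeGroup.of m else FreeGroup.of m * FreeGroup.mk [a]
    else FreeGroup.of t

/-- `g` is an elementary Nielsen fold. -/
def IsNielsenFold {r : ℕ} (g : Monoid.End (FreeGroup (Fin r))) : Prop :=
  ∃ (m : Fin r) (a : Letter r) (pre : Bool), a.1 ≠ m ∧ g = NielsenFoldHom m a pre

/-- The composition `g_{l+cnt-1} ∘ ⋯ ∘ g_{l+1} ∘ g_l` (the map with the smallest index
is applied first). -/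
def compFrom {r : ℕ} (g : ℕ → Monoid.End (FreeGroup (Fin r))) (l cnt : ℕ) :
    Monoid.End (FreeGroup (Fin r)) :=
  (List.range' l cnt).foldl (fun acc i => g i * acc) 1

/-- The direction map of `h`: a letter is sent to the first letter of the reduced word of
its image (the letter itself as a junk value if that word is empty). -/
def Dmap {r : ℕ} (h : Monoid.End (FreeGroup (Fin r))) (d : Letter r) : Letter r :=
  ((h (FreeGroup.mk [d])).toWord).headD d

/-- Apply the maps `g_l, g_{l+1}, …, g_k` successively letterwise to the word `w`. -/
def applyFoldsLW {r : ℕ} (g : ℕ → Monoid.End (FreeGroup (Fin r))) (l k : ℕ)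
    (w : List (Letter r)) : List (Letter r) :=
  (List.range' l (k - l + 1)).foldl (fun v i => applyLW (g i) v) w

/-- The composition `Dg_{l+cnt-1} ∘ ⋯ ∘ Dg_l` of direction maps (smallest index applied
first). -/
def DmapComp {r : ℕ} (g : ℕ → Monoid.End (FreeGroup (Fin r))) (l cnt : ℕ)
    (d : Letter r) : Letter r :=
  (List.range' l cnt).foldl (fun e i => Dmap (g i) e) d

/-- The word `w` crosses the turn `{d, d'}`: it contains `d̄·d'` or `d̄'·d` as an adjacent
two-letter subword. -/
def CrossesTurn {r : ℕ} (w : List (Letter r)) (d d' : Letter r) : Prop :=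
  [d.inv, d'] <:+: w ∨ [d'.inv, d] <:+: w

/-- `{d, d'}` is an edge of the local Whitehead graph `LW(h)`. -/
def LWEdge {r : ℕ} (h : Monoid.End (FreeGroup (Fin r))) (d d' : Letter r) : Prop :=
  d ≠ d' ∧ ∃ p : ℕ, 1 ≤ p ∧ ∃ e : Letter r, CrossesTurn ((applyLW h)^[p] [e]) d d'

/-- `{d, d'}` is an edge of the stable Whitehead graph `SW(h)`: an edge of `LW(h)` both of
whose endpoints are letters fixed by the direction map of `h`. -/
def SWEdge {r : ℕ} (h : Monoid.End (FreeGroup (Fin r))) (d d' : Letter r) : Prop :=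
  LWEdge h d d' ∧ Dmap h d = d ∧ Dmap h d' = d'

lemma reduce_pair {r : ℕ} {x y : Letter r} (h : y ≠ x.inv) :
    FreeGroup.reduce [x, y] = [x, y] := by
  have : ¬ (x.1 = y.1 ∧ x.2 = !y.2) := by
    rintro ⟨h1, h2⟩
    exact h (by cases x; cases y; simp_all [Letter.inv])
  simp [FreeGroup.reduce, this]

lemma ne_inv_of_fst_ne {r : ℕ} {x y : Letter r} (h : y.1 ≠ x.1) : y ≠ x.inv := by
  intro he; exact h (by rw [he]; rfl)

lemma of_eq_mk {r : ℕ} (m : Fin r) :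
    (FreeGroup.of m : FreeGroup (Fin r)) = FreeGroup.mk [(m, true)] := rfl

lemma fold_of {r : ℕ} (m : Fin r) (a : Letter r) (pre : Bool) (t : Fin r) :
    (NielsenFoldHom m a pre) (FreeGroup.of t) =
      if t = m then
        (if pre then FreeGroup.mk [a] * FreeGroup.of m
         else FreeGroup.of m * FreeGroup.mk [a])
      else FreeGroup.of t := by
  show (FreeGroup.lift _) (FreeGroup.of t) = _
  rw [FreeGroup.lift_apply_of]

lemma fold_toWord_u {r : ℕ} (m : Fin r) (a : Letter r) (pre : Bool) (ha : a.1 ≠ m) :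
    ((NielsenFoldHom m a pre) (FreeGroup.mk [(m, pre)])).toWord
      = [if pre then a else a.inv, (m, pre)] := by
  cases pre with
  | true =>
      rw [show FreeGroup.mk [((m : Fin r), true)] = FreeGroup.of m from rfl,
        fold_of, if_pos rfl, if_pos rfl, of_eq_mk, FreeGroup.mul_mk]
      simp only [List.singleton_append, FreeGroup.toWord_mk]
      rw [reduce_pair (ne_inv_of_fst_ne (by simpa [Letter.inv] using Ne.symm ha))]
      simp
  | false =>
      have h1 : FreeGroup.mk [((m : Fin r), false)] = (FreeGroup.of m)⁻¹ := by
        rw [of_eq_mk, FreeGroup.inv_mk]; rfl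
      rw [h1, map_inv, fold_of, if_pos rfl, if_neg (by simp), of_eq_mk,
        FreeGroup.mul_mk, FreeGroup.inv_mk,
        show FreeGroup.invRev ([((m : Fin r), true)] ++ [a])
          = [a.inv, (m, false)] by simp [FreeGroup.invRev, Letter.inv],
        FreeGroup.toWord_mk,
        reduce_pair (ne_inv_of_fst_ne (by simpa [Letter.inv] using Ne.symm ha))]
      simp

lemma fold_mem_toWord {r : ℕ} (m : Fin r) (a : Letter r) (pre : Bool) (ha : a.1 ≠ m)
    (d : Letter r) : d ∈ ((NielsenFoldHom m a pre) (FreeGroup.mk [d])).toWord := by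
  by_cases hd : d = (m, pre)
  · rw [hd, fold_toWord_u m a pre ha]; simp
  · by_cases hd2 : d = (m, !pre)
    · subst hd2
      cases pre with
      | true =>
          have h1 : FreeGroup.mk [((m : Fin r), !true)] = (FreeGroup.of m)⁻¹ := by
            rw [of_eq_mk, FreeGroup.inv_mk]; rfl
          rw [h1, map_inv, fold_of, if_pos rfl, if_pos rfl, of_eq_mk,
            FreeGroup.mul_mk, FreeGroup.inv_mk,
            show FreeGroup.invRev ([a] ++ [((m : Fin r), true)])
              = [(m, false), a.inv] by simp [FreeGroup.invRev, Letter.inv],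
            FreeGroup.toWord_mk,
            reduce_pair (ne_inv_of_fst_ne (by simpa [Letter.inv] using ha))]
          simp
      | false =>
          rw [show FreeGroup.mk [((m : Fin r), !false)] = FreeGroup.of m from rfl,
            fold_of, if_pos rfl, if_neg (by simp), of_eq_mk, FreeGroup.mul_mk]
          simp only [List.singleton_append, FreeGroup.toWord_mk]
          rw [reduce_pair (ne_inv_of_fst_ne (by simpa [Letter.inv] using ha))]
          simp
    · have hm : d.1 ≠ m := by
        rcases d with ⟨d1, d2⟩
        intro h
        cases d2 <;> cases pre <;> simp_all
      have key : (NielsenFoldHom m a pre) (FreeGroup.mk [d]) = FreeGroup.mk [d] := by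
        rcases d with ⟨d1, d2⟩
        cases d2 with
        | true =>
            rw [show FreeGroup.mk [(d1, true)] = FreeGroup.of d1 from rfl,
              fold_of, if_neg (by simpa using hm)]
        | false =>
            have h1 : FreeGroup.mk [(d1, false)] = (FreeGroup.of d1)⁻¹ := by
              rw [of_eq_mk, FreeGroup.inv_mk]; rfl
            rw [h1, map_inv, fold_of, if_neg (by simpa using hm)]
      rw [key, FreeGroup.toWord_mk, FreeGroup.reduce_singleton]
      simp

lemma mem_applyLW_fold {r : ℕ} (m : Fin r) (a : Letter r) (pre : Bool) (ha : a.1 ≠ m)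
    {u : Letter r} {w : List (Letter r)} (hu : u ∈ w) :
    u ∈ applyLW (NielsenFoldHom m a pre) w :=
  List.mem_flatMap.mpr ⟨u, hu, fold_mem_toWord m a pre ha u⟩

lemma mem_foldl_applyLW {r : ℕ} (g : ℕ → Monoid.End (FreeGroup (Fin r)))
    (m : ℕ → Fin r) (a : ℕ → Letter r) (pre : ℕ → Bool)
    (hfold : ∀ k, (a k).1 ≠ m k ∧ g k = NielsenFoldHom (m k) (a k) (pre k))
    (L : List ℕ) {u : Letter r} :
    ∀ w : List (Letter r), u ∈ w → u ∈ L.foldl (fun v i => applyLW (g i) v) w := by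
  induction L with
  | nil => intro w hw; simpa using hw
  | cons i L ih =>
      intro w hw
      rw [List.foldl_cons]
      apply ih
      obtain ⟨ha, hg⟩ := hfold i
      rw [hg]
      exact mem_applyLW_fold _ _ _ ha hw

/-- Let `g_1, …, g_n` be elementary Nielsen folds (with data: folded index
`m k`, fold letter `a k`, side `pre k`, so that the unique letter moved by `Dg_k` is
`u_k = (m k, pre k)`) whose composition `g = g_n ∘ ⋯ ∘ g_1` is a train track map, with
indices extended periodically by `g_{k+n} = g_k`.  Then for every `l ≤ k`, the word
obtained by applying `g_l, …, g_k` successively letterwise to the one-letter word `u_k`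
contains `Dg_k(u_k)·u_k` as an adjacent two-letter subword (i.e. crosses the turn
`{Dg_k(u_k)⁻¹, u_k}`). -/
theorem unachieved_turn_crossed {r n : ℕ} (hn : 1 ≤ n)
    (g : ℕ → Monoid.End (FreeGroup (Fin r)))
    (m : ℕ → Fin r) (a : ℕ → Letter r) (pre : ℕ → Bool)
    (hper : ∀ k, g (k + n) = g k)
    (hfold : ∀ k, (a k).1 ≠ m k ∧ g k = NielsenFoldHom (m k) (a k) (pre k))
    (htt : IsTrainTrack (compFrom g 1 n)) :
    ∀ k l, l ≤ k →
      [Dmap (g k) (m k, pre k), (m k, pre k)] <:+: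
        applyFoldsLW g l k [(m k, pre k)] := by
  intro k l hl
  obtain ⟨ha, hg⟩ := hfold k
  set u : Letter r := (m k, pre k) with hu
  have htw : ((g k) (FreeGroup.mk [u])).toWord
      = [if pre k then a k else (a k).inv, u] := by
    rw [hg]; exact fold_toWord_u _ _ _ ha
  have hD : Dmap (g k) u = if pre k then a k else (a k).inv := by
    rw [Dmap, htw]; rfl
  have hsplit : applyFoldsLW g l k [u] =
      applyLW (g k) ((List.range' l (k - l)).foldl (fun v i => applyLW (g i) v) [u]) := by
    rw [applyFoldsLW, List.range'_1_concat, List.foldl_append,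
      Nat.add_sub_cancel' hl]
    rfl
  have hmem : u ∈ (List.range' l (k - l)).foldl (fun v i => applyLW (g i) v) [u] :=
    mem_foldl_applyLW g m a pre hfold _ _ (by simp)
  obtain ⟨s, t, hst⟩ := List.append_of_mem hmem
  rw [hsplit, hst, hD]
  refine ⟨applyLW (g k) s, applyLW (g k) t, ?_⟩
  simp only [applyLW, List.flatMap_append, List.flatMap_cons]
  rw [htw]
  simp
end

section
/- Let S be a finite set with at least 2 elements, let n ≥ 1, and for each k ∈ ℤ/nℤ let D_k : S → S be a map for which there exist distinct elements u_k ≠ a_k of S with D_k(u_k) = a_k and D_k(x) = x for every x ≠ u_k. For each k let F_k = D_k∘D_{k-1}∘⋯∘D_1∘D_n∘⋯∘D_{k+1} be the cyclic composition of all n maps ending with D_k. If for every k the map F_k fixes exactly |S| − 1 elements of S, then for every k (indices taken mod n) one has u_k ∈ {u_{k+1}, a_{k+1}}. -/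
private lemma flatMap_singleton_eq_map {α β : Type*} (f : α → β) (l : List α) :
    (l.flatMap fun a => [f a]) = l.map f := by
  induction l with
  | nil => rfl
  | cons h t ih => simp [List.flatMap] at *; exact ih

/-- Let `S` be a finite set with at least 2 elements and, for each
`k ∈ ℤ/nℤ` (`n ≥ 1`), let `D k : S → S` move exactly one element `u k` (to `a k ≠ u k`)
and fix everything else.  Let `F k = D_k ∘ D_{k-1} ∘ ⋯ ∘ D_{k+1}` be the cyclic
composition of all `n` maps ending with `D k` (so `D_{k+1}` is applied first).  If every
`F k` fixes exactly `|S| − 1` elements, then `u k ∈ {u (k+1), a (k+1)}` for every `k`. -/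
theorem unachieved_in_illegal_turn {S : Type*} [Fintype S] (hS : 2 ≤ Fintype.card S)
    (n : ℕ) (hn : 1 ≤ n)
    (D : ZMod n → S → S) (u a : ZMod n → S)
    (hua : ∀ k, u k ≠ a k)
    (hD1 : ∀ k, D k (u k) = a k)
    (hD2 : ∀ k x, x ≠ u k → D k x = x)
    (F : ZMod n → S → S)
    (hF : ∀ k x, F k x = (List.range n).foldl (fun y i => D (k + (i : ZMod n) + 1) y) x)
    (hfix : ∀ k, Nat.card {x : S // F k x = x} = Fintype.card S - 1) :
    ∀ k, u k = u (k + 1) ∨ u k = a (k + 1) := by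
  classical
  have hF' : ∀ (j : ZMod n) (x : S),
      F j x = (List.range n).foldl (fun y (i : ℕ) => D (j + (i : ZMod n) + 1) y) x := by
    intro j x
    rw [hF]
    show List.foldl _ x ((List.range n).flatMap fun a => [((a : ℕ) : ZMod n)]) = _
    rw [flatMap_singleton_eq_map, List.foldl_map]
  clear hF
  -- `D j` never hits `u j`
  have hDne : ∀ j (y : S), D j y ≠ u j := by
    intro j y hy
    by_cases hyu : y = u j
    · rw [hyu, hD1] at hy; exact hua j hy.symm
    · rw [hD2 j y hyu] at hy; exact hyu hy
  have hncast : ((n : ZMod n)) = 0 := ZMod.natCast_self n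
  -- `F j` never hits `u j`
  have hFne : ∀ j x, F j x ≠ u j := by
    intro j x
    rw [hF']
    obtain ⟨m, rfl⟩ : ∃ m, n = m + 1 := ⟨n - 1, (Nat.succ_pred_eq_of_pos hn).symm⟩
    rw [List.range_succ, List.foldl_append]
    simp only [List.foldl_cons, List.foldl_nil]
    have hidx : (j + ((m : ZMod (m + 1))) + 1) = j := by
      have h0 : ((m : ZMod (m + 1))) + 1 = 0 := by
        have := hncast
        push_cast at this
        linear_combination this
      rw [add_assoc, h0, add_zero]
    rw [hidx]
    exact hDne j _
  -- each `F j` fixes everything except `u j`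
  have huniq : ∀ j x, x ≠ u j → F j x = x := by
    intro j x hx
    by_contra hfx
    have hcard : (Finset.univ.filter (fun y => F j y = y)).card = Fintype.card S - 1 := by
      rw [← hfix j, Nat.card_eq_fintype_card, Fintype.card_subtype]
    have hsum := Finset.card_filter_add_card_filter_not
      (s := (Finset.univ : Finset S)) (p := fun y => F j y = y)
    have huniv : (Finset.univ : Finset S).card = Fintype.card S := Finset.card_univ
    have hcard2 : (Finset.univ.filter (fun y => ¬ F j y = y)).card = 1 := by omega
    obtain ⟨z, hz⟩ := Finset.card_eq_one.mp hcard2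
    have hxz : x = z := by
      have hxm : x ∈ Finset.univ.filter (fun y => ¬ F j y = y) :=
        Finset.mem_filter.mpr ⟨Finset.mem_univ _, hfx⟩
      rwa [hz, Finset.mem_singleton] at hxm
    have huz : u j = z := by
      have hum : u j ∈ Finset.univ.filter (fun y => ¬ F j y = y) :=
        Finset.mem_filter.mpr ⟨Finset.mem_univ _, hFne j (u j)⟩
      rwa [hz, Finset.mem_singleton] at hum
    exact hx (hxz.trans huz.symm)
  intro k
  by_contra hcon
  push_neg at hcon
  obtain ⟨h1, h2⟩ := hcon
  -- conjugation relation
  have hconj : ∀ x, F (k + 1) (D (k + 1) x) = D (k + 1) (F k x) := by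
    intro x
    rw [hF', hF']
    have key : ∀ m : ℕ,
        List.foldl (fun y (i : ℕ) => D (k + 1 + (i : ZMod n) + 1) y) (D (k + 1) x)
          (List.range m)
        = List.foldl (fun y (i : ℕ) => D (k + (i : ZMod n) + 1) y) x (List.range (m + 1)) := by
      intro m
      induction m with
      | zero =>
        show D (k + 1) x = D (k + ((0 : ℕ) : ZMod n) + 1) x
        norm_num
      | succ m ih =>
        rw [List.range_succ, List.foldl_append, ih, List.range_succ (n := m + 1),
          List.foldl_append]
        simp only [List.foldl_cons, List.foldl_nil]
        congr 1
        push_cast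
        ring
    rw [key n, List.range_succ, List.foldl_append]
    simp only [List.foldl_cons, List.foldl_nil]
    congr 1
    rw [hncast, add_zero]
  have hDuk : D (k + 1) (u k) = u k := hD2 (k + 1) (u k) h1
  have hFk1 : F (k + 1) (u k) = u k := huniq (k + 1) (u k) h1
  have heq : D (k + 1) (F k (u k)) = u k := by
    rw [← hconj, hDuk, hFk1]
  by_cases hc : F k (u k) = u (k + 1)
  · rw [hc, hD1] at heq
    exact h2 heq.symm
  · rw [hD2 (k + 1) _ hc] at heq
    exact hFne k (u k) heq
end

section
/- Let r ≥ 2 and let φ = g_n∘⋯∘g_1 be an automorphism of F_r written as a composition of elementary Nielsen folds, where for each k the fold g_k has folded index m_k and prefix/suffix letter a_k (that is, g_k(x_{m_k}) = a_k·x_{m_k} or g_k(x_{m_k}) = x_{m_k}·a_k with a_k ∉ {x_{m_k}, x_{m_k}^{-1}}, and g_k fixes x_t for all t ≠ m_k). If φ is fully irreducible, then for every index j ∈ {1, …, r} there exists some k with a_k ∈ {x_j, x_j^{-1}}. -/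
/-- `H` is a free factor of the free group `F_r`: for some free basis (equivalently, some
automorphic image of the standard basis) `H` is generated by a subset of that basis. -/
def IsFreeFactor {r : ℕ} (H : Subgroup (FreeGroup (Fin r))) : Prop :=
  ∃ (e : FreeGroup (Fin r) ≃* FreeGroup (Fin r)) (S : Set (Fin r)),
    H = Subgroup.map e.toMonoidHom (Subgroup.closure (FreeGroup.of '' S))

/-- `φ` is fully irreducible: no positive power of `φ` maps a proper free factor to a
conjugate of itself. -/
def IsFullyIrreducible {r : ℕ} (φ : Monoid.End (FreeGroup (Fin r))) : Prop :=
  ¬ ∃ (n : ℕ) (H : Subgroup (FreeGroup (Fin r))) (w : FreeGroup (Fin r)),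
      1 ≤ n ∧ IsFreeFactor H ∧ H ≠ ⊥ ∧ H ≠ ⊤ ∧
      Subgroup.map (φ ^ n) H = Subgroup.map (MulAut.conj w).toMonoidHom H

lemma mk_single_mem' {r : ℕ} (K : Subgroup (FreeGroup (Fin r))) (d : Fin r × Bool)
    (h : FreeGroup.of d.1 ∈ K) : FreeGroup.mk [d] ∈ K := by
  obtain ⟨i, b⟩ := d
  cases b
  · have : FreeGroup.mk [(i, false)] = (FreeGroup.of i)⁻¹ := by
      rw [show FreeGroup.of i = FreeGroup.mk [(i,true)] from rfl, FreeGroup.inv_mk]; rfl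
    rw [this]; exact inv_mem h
  · exact h

lemma NFH_of {r : ℕ} (m : Fin r) (a : Fin r × Bool) (pre : Bool) (t : Fin r) :
    NielsenFoldHom m a pre (FreeGroup.of t) =
      if t = m then
        (if pre then FreeGroup.mk [a] * FreeGroup.of m else FreeGroup.of m * FreeGroup.mk [a])
      else FreeGroup.of t := FreeGroup.lift_apply_of

lemma foldl_mul_eq {M : Type*} [Monoid M] (g : ℕ → M) (L : List ℕ) (x : M) :
    L.foldl (fun acc i => g i * acc) x = L.foldl (fun acc i => g i * acc) 1 * x := by
  induction L generalizing x with
  | nil => simp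
  | cons i L ih => simp only [List.foldl_cons]; rw [ih (g i * x), ih (g i * 1), mul_one, mul_assoc]



lemma map_NFH {r : ℕ} (j m : Fin r) (a : Letter r) (pre : Bool)
    (ham : a.1 ≠ m) (haj : a.1 ≠ j) :
    Subgroup.map (NielsenFoldHom m a pre)
        (Subgroup.closure (FreeGroup.of '' {t | t ≠ j}))
      = Subgroup.closure (FreeGroup.of '' {t | t ≠ j}) := by
  set S : Set (Fin r) := {t | t ≠ j} with hS
  rw [show Subgroup.map (NielsenFoldHom m a pre) (Subgroup.closure (FreeGroup.of '' S))
      = Subgroup.closure ((NielsenFoldHom m a pre) '' (FreeGroup.of '' S)) from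
    MonoidHom.map_closure _ _]
  apply le_antisymm
  · rw [Subgroup.closure_le]
    rintro _ ⟨_, ⟨t, ht, rfl⟩, rfl⟩
    have h1 : FreeGroup.of t ∈ Subgroup.closure (FreeGroup.of '' S) :=
      Subgroup.subset_closure ⟨t, ht, rfl⟩
    have h2 : FreeGroup.mk [a] ∈ Subgroup.closure (FreeGroup.of '' S) :=
      mk_single_mem' _ a (Subgroup.subset_closure ⟨a.1, haj, rfl⟩)
    rw [SetLike.mem_coe, NFH_of]
    by_cases htm : t = m
    · subst htm
      rw [if_pos rfl]
      cases pre
      · exact mul_mem h1 h2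
      · exact mul_mem h2 h1
    · rw [if_neg htm]; exact h1
  · rw [Subgroup.closure_le]
    rintro _ ⟨t, ht, rfl⟩
    set K := Subgroup.closure ((NielsenFoldHom m a pre) '' (FreeGroup.of '' S)) with hK
    by_cases htm : t = m
    · have ha1 : FreeGroup.of a.1 ∈ K := by
        have he : NielsenFoldHom m a pre (FreeGroup.of a.1) = FreeGroup.of a.1 := by
          rw [NFH_of, if_neg ham]
        exact he ▸ Subgroup.subset_closure ⟨_, ⟨a.1, haj, rfl⟩, rfl⟩
      have hak : FreeGroup.mk [a] ∈ K := mk_single_mem' _ a ha1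
      have him : NielsenFoldHom m a pre (FreeGroup.of t) ∈ K :=
        Subgroup.subset_closure ⟨_, ⟨t, ht, rfl⟩, rfl⟩
      rw [NFH_of, if_pos htm] at him
      rw [SetLike.mem_coe, htm]
      cases pre
      · simp only [if_neg Bool.false_ne_true] at him
        have h3 := mul_mem him (inv_mem hak)
        rwa [mul_inv_cancel_right] at h3
      · simp only [if_true] at him
        have h3 := mul_mem (inv_mem hak) him
        rwa [inv_mul_cancel_left] at h3
    · have he : NielsenFoldHom m a pre (FreeGroup.of t) = FreeGroup.of t := by
        rw [NFH_of, if_neg htm]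
      exact he ▸ Subgroup.subset_closure ⟨_, ⟨t, ht, rfl⟩, rfl⟩

lemma map_compFrom {r : ℕ} (g : ℕ → Monoid.End (FreeGroup (Fin r)))
    (H : Subgroup (FreeGroup (Fin r))) :
    ∀ cnt l, (∀ i, l ≤ i → i < l + cnt → Subgroup.map (g i) H = H) →
      Subgroup.map (compFrom g l cnt) H = H := by
  intro cnt
  induction cnt with
  | zero =>
    intro l _
    rw [show compFrom g l 0 = 1 from rfl,
      show (1 : Monoid.End (FreeGroup (Fin r))) = MonoidHom.id _ from rfl, Subgroup.map_id]
  | succ c ih =>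
    intro l hl
    have hcomp : compFrom g l (c+1) = compFrom g (l+1) c * g l := by
      unfold compFrom
      rw [List.range'_succ, List.foldl_cons, foldl_mul_eq, mul_one]
    have step : Subgroup.map (compFrom g (l+1) c * g l) H
        = Subgroup.map (compFrom g (l+1) c) (Subgroup.map (g l) H) :=
      (Subgroup.map_map H _ _).symm
    rw [hcomp, step, hl l le_rfl (by omega),
      ih (l+1) (fun i h1 h2 => hl i (by omega) (by omega))]

/-- If `φ = g_n ∘ ⋯ ∘ g_1` is a fully irreducible automorphism of `F_r`
(`r ≥ 2`) written as a composition of elementary Nielsen folds, where `g_k` has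
prefix/suffix letter `a k`, then for every index `j` some `a k` lies in `{x_j, x_j⁻¹}`. -/
theorem every_index_achieved_of_fullyIrreducible {r n : ℕ} (hr : 2 ≤ r) (hn : 1 ≤ n)
    (g : ℕ → Monoid.End (FreeGroup (Fin r)))
    (m : ℕ → Fin r) (a : ℕ → Letter r) (pre : ℕ → Bool)
    (hfold : ∀ k, 1 ≤ k → k ≤ n → (a k).1 ≠ m k ∧ g k = NielsenFoldHom (m k) (a k) (pre k))
    (hfi : IsFullyIrreducible (compFrom g 1 n)) :
    ∀ j : Fin r, ∃ k, 1 ≤ k ∧ k ≤ n ∧ (a k).1 = j := by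
  intro j
  by_contra hcon
  push_neg at hcon
  apply hfi
  set S : Set (Fin r) := {t | t ≠ j} with hS
  set H : Subgroup (FreeGroup (Fin r)) := Subgroup.closure (FreeGroup.of '' S) with hH
  haveI : Nontrivial (Fin r) := Fin.nontrivial_iff_two_le.mpr hr
  obtain ⟨t0, ht0⟩ := exists_ne j
  have hmem : FreeGroup.of t0 ∈ H := Subgroup.subset_closure ⟨t0, ht0, rfl⟩
  refine ⟨1, H, 1, le_refl 1, ⟨MulEquiv.refl _, S, by rw [hH]; ext x; simp⟩, ?_, ?_, ?_⟩
  · intro hb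
    rw [hb] at hmem
    exact FreeGroup.of_ne_one t0 (Subgroup.mem_bot.mp hmem)
  · intro ht
    have hj : FreeGroup.of j ∈ H := by rw [ht]; trivial
    set χ : FreeGroup (Fin r) →* Multiplicative ℤ :=
      FreeGroup.lift (fun t => if t = j then Multiplicative.ofAdd (1:ℤ) else 1) with hχ
    have hker : H ≤ χ.ker := by
      rw [hH, Subgroup.closure_le]
      rintro _ ⟨t, htS, rfl⟩
      simp [hχ, MonoidHom.mem_ker, FreeGroup.lift_apply_of, if_neg htS]
    have hk2 := hker hj
    rw [MonoidHom.mem_ker] at hk2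
    simp [hχ, FreeGroup.lift_apply_of] at hk2
  · rw [pow_one]
    have lhs : Subgroup.map (compFrom g 1 n) H = H := by
      apply map_compFrom
      intro i h1 h2
      obtain ⟨ham, hg⟩ := hfold i h1 (by omega)
      rw [hg, hH, hS]
      exact map_NFH j (m i) (a i) (pre i) ham (hcon i h1 (by omega))
    rw [lhs]
    ext x
    simp
end
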